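/- arXiv:2203.04381 — 2 statements merged into one kernel-verified Lean document; each statement's English description precedes it below -/
import Mathlib

section
/- Let L : [0,∞) → ℝ be defined by L(t) = r(t)ᵀ(N̄₂(t) − κ_d sgn(ζ(t))) + ζ̇(t)ᵀÑ₁(t) + c·ζ(t)ᵀ sgn(ζ(t)), where r = ζ̇ + k₂ζ. Suppose ‖N̄₂(t)‖ ≤ ε_M + d_M, ‖dN̄₂/dt(t)‖ ≤ d_{dM} + ε_{dM}, ‖Ñ₁(t)‖ ≤ N_M, ‖dÑ₁/dt(t)‖ ≤ N_{dM}, and κ_d = d_M + ε_M + (1/k₂)·max{d_{dM} + ε_{dM} + N_{dM} + c, k₂N_M}. Then for all t ≥ 0, ∫₀ᵗ L(s) ds ≤ κ_d‖ζ(0)‖₁ − ζ(0)ᵀ(N̄₂(0) + Ñ₁(0)), i.e., the quantity M(t) = κ_d‖ζ(0)‖₁ − ζ(0)ᵀ(N̄₂(0) + Ñ₁(0)) − ∫₀ᵗ L(s) ds is nonnegative. -/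
/-!
Because `ζᵀ sgn ζ = ‖ζ‖₁`, and `‖ζ‖₁` has derivative `ζ̇ᵀ sgn ζ` off the countable set of
times where a coordinate of `ζ` vanishes with nonzero derivative, integration by parts gives
`∫₀ᵗ L = [ζᵀ(N̄₂ + Ñ₁) - κ_d ‖ζ‖₁]₀ᵗ + ∫₀ᵗ (k₂ ζᵀN̄₂ - (k₂ κ_d - c) ‖ζ‖₁ - ζᵀ(dN̄₂/dt + dÑ₁/dt))`.
Using `|xᵢ| ≤ ‖x‖`, the choice of `κ_d` makes the boundary term at `t` and the remaining
integrand nonpositive, which leaves the boundary term at `0`. When `L` is not integrable the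
integral is `0` by convention, and the claim reduces to the nonnegativity of that term.
-/

open MeasureTheory intervalIntegral

theorem Real.self_mul_sign (x : ℝ) : x * Real.sign x = |x| := by
  rcases lt_trichotomy x 0 with h | rfl | h
  · rw [Real.sign_of_neg h, abs_of_neg h, mul_neg_one]
  · simp
  · rw [Real.sign_of_pos h, abs_of_pos h, mul_one]

theorem HasDerivAt.abs_of_eq_zero {f : ℝ → ℝ} {x : ℝ} (hf : HasDerivAt f 0 x) (hx : f x = 0) :
    HasDerivAt (fun y => |f y|) 0 x := by
  rw [hasDerivAt_iff_isLittleO] at hf ⊢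
  simpa [hx] using hf.norm_left

theorem HasDerivAt.abs_of_eq_zero_imp {f : ℝ → ℝ} {f' x : ℝ} (hf : HasDerivAt f f' x)
    (h : f x = 0 → f' = 0) : HasDerivAt (fun y => |f y|) (f' * Real.sign (f x)) x := by
  rcases lt_trichotomy (f x) 0 with hx | hx | hx
  · simpa [Real.sign_of_neg hx, Function.comp_def] using (hasDerivAt_abs_neg hx).comp x hf
  · obtain rfl := h hx
    simpa using hf.abs_of_eq_zero hx
  · simpa [Real.sign_of_pos hx, Function.comp_def] using (hasDerivAt_abs_pos hx).comp x hf

theorem countable_setOf_eq_and_deriv_ne_zero {F : Type*} [NormedAddCommGroup F]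
    [NormedSpace ℝ F] {f f' : ℝ → F} (hf : ∀ x, HasDerivAt f (f' x) x) (c : F) :
    {x | f x = c ∧ f' x ≠ 0}.Countable := by
  set S := {x | f x = c ∧ f' x ≠ 0}
  have : DiscreteTopology S := by
    refine discreteTopology_subtype_iff.2 fun x hx => Filter.inf_principal_eq_bot.2 ?_
    filter_upwards [(hf x).eventually_ne (c := c) hx.2] with y hy hyS using hy hyS.1
  exact Set.countable_coe_iff.1 (TopologicalSpace.separableSpace_iff_countable.1 inferInstance)

theorem measurable_of_hasDerivAt {F : Type*} [NormedAddCommGroup F] [NormedSpace ℝ F]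
    [CompleteSpace F] [MeasurableSpace F] [BorelSpace F] {f f' : ℝ → F}
    (hf : ∀ x, HasDerivAt f (f' x) x) : Measurable f' :=
  funext (fun x => (hf x).deriv) ▸ measurable_deriv f

theorem HasDerivAt.piLp_apply {𝕜 ι : Type*} [NontriviallyNormedField 𝕜] [Fintype ι]
    {p : ENNReal} [Fact (1 ≤ p)] {E : ι → Type*} [∀ i, NormedAddCommGroup (E i)]
    [∀ i, NormedSpace 𝕜 (E i)] {f : 𝕜 → PiLp p E} {f' : PiLp p E} {x : 𝕜}
    (hf : HasDerivAt f f' x) (i : ι) : HasDerivAt (fun y => f y i) (f' i) x :=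
  (PiLp.hasFDerivAt_apply p (f x) i).comp_hasDerivAt x hf

theorem add_le_of_eq_add_one_div_mul_max {k κ m a b : ℝ} (hk : 0 < k)
    (hκ : κ = m + 1 / k * max a (k * b)) : m + b ≤ κ := by
  have : b ≤ 1 / k * max a (k * b) := by
    rw [one_div_mul_eq_div, le_div_iff₀ hk, mul_comm]
    exact le_max_right _ _
  linarith

theorem mul_add_le_mul_of_eq_add_one_div_mul_max {k κ m a b : ℝ} (hk : 0 < k)
    (hκ : κ = m + 1 / k * max a (k * b)) : k * m + a ≤ k * κ := by
  rw [hκ, mul_add, one_div_mul_eq_div, mul_div_cancel₀ _ hk.ne']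
  linarith [le_max_left a (k * b)]

section

variable {ι : Type*} [Fintype ι] {p : ENNReal} [Fact (1 ≤ p)]

theorem abs_sum_mul_le_of_norm_le (x : ι → ℝ) {y : PiLp p (fun _ : ι => ℝ)} {C : ℝ}
    (hy : ‖y‖ ≤ C) : |∑ i, x i * y i| ≤ C * ∑ i, |x i| := by
  rw [Finset.mul_sum]
  refine (Finset.abs_sum_le_sum_abs _ _).trans (Finset.sum_le_sum fun i _ => ?_)
  rw [abs_mul, mul_comm]
  exact mul_le_mul_of_nonneg_right ((PiLp.norm_apply_le y i).trans hy) (abs_nonneg _)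

theorem sum_mul_le_of_norm_le (x : ι → ℝ) {y : PiLp p (fun _ : ι => ℝ)} {C : ℝ}
    (hy : ‖y‖ ≤ C) : ∑ i, x i * y i ≤ C * ∑ i, |x i| :=
  (le_abs_self _).trans (abs_sum_mul_le_of_norm_le x hy)

theorem sum_mul_sub_mul_sum_abs_nonpos (z : ι → ℝ) {v : PiLp p (fun _ : ι => ℝ)} {A κ : ℝ}
    (hv : ‖v‖ ≤ A) (hκ : A ≤ κ) : ∑ i, z i * v i - κ * ∑ i, |z i| ≤ 0 := by
  have hS : 0 ≤ ∑ i, |z i| := Finset.sum_nonneg fun i _ => abs_nonneg (z i)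
  have := mul_le_mul_of_nonneg_right hκ hS
  linarith [sum_mul_le_of_norm_le z hv]

theorem mul_sum_mul_add_mul_sum_abs_sub_sum_mul_nonpos (z : ι → ℝ) {k c κ A B : ℝ}
    {a w : PiLp p (fun _ : ι => ℝ)} (hk : 0 ≤ k) (ha : ‖a‖ ≤ A) (hw : ‖w‖ ≤ B)
    (hκ : k * A + c + B ≤ k * κ) :
    k * ∑ i, z i * a i + (c - k * κ) * ∑ i, |z i| - ∑ i, z i * w i ≤ 0 := by
  have hS : 0 ≤ ∑ i, |z i| := Finset.sum_nonneg fun i _ => abs_nonneg (z i)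
  have h₁ := mul_le_mul_of_nonneg_left (sum_mul_le_of_norm_le z ha) hk
  have h₂ := neg_le_of_abs_le (abs_sum_mul_le_of_norm_le z hw)
  nlinarith

theorem sum_mul_sub_mul_sign_eq (k c κ : ℝ) (z z' a b w : ι → ℝ) :
    ∑ i, (z' i + k * z i) * (a i - κ * Real.sign (z i)) + ∑ i, z' i * b i
        + c * ∑ i, z i * Real.sign (z i)
      = (∑ i, (z' i * (a i + b i) + z i * w i) - κ * ∑ i, z' i * Real.sign (z i))
        + (k * ∑ i, z i * a i + (c - k * κ) * ∑ i, |z i| - ∑ i, z i * w i) := by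
  simp only [← Real.self_mul_sign, Finset.mul_sum, ← Finset.sum_add_distrib,
    ← Finset.sum_sub_distrib]
  exact Finset.sum_congr rfl fun i _ => by ring

theorem intervalIntegrable_sum_mul {ζ W : ℝ → EuclideanSpace ℝ ι} (hζ : Continuous ζ)
    (hW : Measurable W) {C : ℝ} (hWC : ∀ s, ‖W s‖ ≤ C) (a b : ℝ) :
    IntervalIntegrable (fun s => ∑ i, ζ s i * W s i) volume a b := by
  simp only [← Finset.sum_fn]
  refine IntervalIntegrable.sum _ fun i _ => ?_
  have hWi : IntervalIntegrable (fun s => W s i) volume a b :=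
    intervalIntegrable_const.mono_fun' (by fun_prop)
      (ae_of_all _ fun s => (PiLp.norm_apply_le (W s) i).trans (hWC s))
  exact hWi.continuousOn_mul (by fun_prop)

theorem exists_countable_hasDerivAt_sum_abs {ζ ζ' : ℝ → EuclideanSpace ℝ ι}
    (hζ : ∀ t, HasDerivAt ζ (ζ' t) t) :
    ∃ S : Set ℝ, S.Countable ∧ ∀ t ∉ S,
      HasDerivAt (fun s => ∑ i, |ζ s i|) (∑ i, ζ' t i * Real.sign (ζ t i)) t := by
  refine ⟨⋃ i, {t | ζ t i = 0 ∧ ζ' t i ≠ 0},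
    Set.countable_iUnion fun i => countable_setOf_eq_and_deriv_ne_zero
      (fun t => (hζ t).piLp_apply i) 0, fun t ht => ?_⟩
  have hζt : ∀ i, ζ t i = 0 → ζ' t i = 0 := fun i h0 =>
    by_contra fun hne => ht (Set.mem_iUnion.2 ⟨i, h0, hne⟩)
  exact HasDerivAt.fun_sum fun i _ => ((hζ t).piLp_apply i).abs_of_eq_zero_imp (hζt i)

theorem integral_sum_mul_sub_mul_sum_abs {ζ ζ' V V' : ℝ → EuclideanSpace ℝ ι}
    (hζ : ∀ t, HasDerivAt ζ (ζ' t) t) (hV : ∀ t, HasDerivAt V (V' t) t) (κ a b : ℝ)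
    (hint : IntervalIntegrable (fun s => ∑ i, (ζ' s i * V s i + ζ s i * V' s i)
      - κ * ∑ i, ζ' s i * Real.sign (ζ s i)) volume a b) :
    ∫ s in a..b, (∑ i, (ζ' s i * V s i + ζ s i * V' s i) - κ * ∑ i, ζ' s i * Real.sign (ζ s i))
      = (∑ i, ζ b i * V b i - κ * ∑ i, |ζ b i|) - (∑ i, ζ a i * V a i - κ * ∑ i, |ζ a i|) := by
  obtain ⟨S, hS, habs⟩ := exists_countable_hasDerivAt_sum_abs hζ
  have hderiv : ∀ t ∉ S, HasDerivAt (fun s => ∑ i, ζ s i * V s i - κ * ∑ i, |ζ s i|)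
      (∑ i, (ζ' t i * V t i + ζ t i * V' t i) - κ * ∑ i, ζ' t i * Real.sign (ζ t i)) t :=
    fun t ht => (HasDerivAt.fun_sum fun i _ =>
      ((hζ t).piLp_apply i).mul ((hV t).piLp_apply i)).sub ((habs t ht).const_mul κ)
  have hζc : Continuous ζ := continuous_iff_continuousAt.2 fun t => (hζ t).continuousAt
  have hVc : Continuous V := continuous_iff_continuousAt.2 fun t => (hV t).continuousAt
  exact integral_eq_of_hasDerivAt_off_countable _ _ hS (by fun_prop)
    (fun t ht => hderiv t ht.2) hint

end

section

variable {ι : Type*} [Fintype ι] {ζ ζ' N₂ N₂' N₁ N₁' : ℝ → EuclideanSpace ℝ ι}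

theorem intervalIntegrable_remainder (hζ : ∀ t, HasDerivAt ζ (ζ' t) t)
    (hN₂ : ∀ t, HasDerivAt N₂ (N₂' t) t) (hN₁ : ∀ t, HasDerivAt N₁ (N₁' t) t) {C : ℝ}
    (hC : ∀ t, ‖N₂' t + N₁' t‖ ≤ C) (k c κ a b : ℝ) :
    IntervalIntegrable (fun s => k * ∑ i, ζ s i * N₂ s i + (c - k * κ) * ∑ i, |ζ s i|
      - ∑ i, ζ s i * (N₂' s i + N₁' s i)) volume a b := by
  have hζc : Continuous ζ := continuous_iff_continuousAt.2 fun s => (hζ s).continuousAt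
  have hN₂c : Continuous N₂ := continuous_iff_continuousAt.2 fun s => (hN₂ s).continuousAt
  have hcont : Continuous fun s => k * ∑ i, ζ s i * N₂ s i + (c - k * κ) * ∑ i, |ζ s i| := by
    fun_prop
  simpa only [Pi.add_apply, PiLp.add_apply] using (hcont.intervalIntegrable a b).sub
    (intervalIntegrable_sum_mul hζc
      ((measurable_of_hasDerivAt hN₂).add (measurable_of_hasDerivAt hN₁)) hC a b)

theorem integral_eq_sub_add_integral_remainder (hζ : ∀ t, HasDerivAt ζ (ζ' t) t)
    (hN₂ : ∀ t, HasDerivAt N₂ (N₂' t) t) (hN₁ : ∀ t, HasDerivAt N₁ (N₁' t) t) (k c κ a b : ℝ)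
    (hL : IntervalIntegrable (fun s =>
      ∑ i, (ζ' s i + k * ζ s i) * (N₂ s i - κ * Real.sign (ζ s i)) + ∑ i, ζ' s i * N₁ s i
        + c * ∑ i, ζ s i * Real.sign (ζ s i)) volume a b)
    (hG : IntervalIntegrable (fun s => k * ∑ i, ζ s i * N₂ s i + (c - k * κ) * ∑ i, |ζ s i|
      - ∑ i, ζ s i * (N₂' s i + N₁' s i)) volume a b) :
    ∫ s in a..b, (∑ i, (ζ' s i + k * ζ s i) * (N₂ s i - κ * Real.sign (ζ s i))
        + ∑ i, ζ' s i * N₁ s i + c * ∑ i, ζ s i * Real.sign (ζ s i))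
      = (∑ i, ζ b i * (N₂ b i + N₁ b i) - κ * ∑ i, |ζ b i|)
        - (∑ i, ζ a i * (N₂ a i + N₁ a i) - κ * ∑ i, |ζ a i|)
        + ∫ s in a..b, (k * ∑ i, ζ s i * N₂ s i + (c - k * κ) * ∑ i, |ζ s i|
          - ∑ i, ζ s i * (N₂' s i + N₁' s i)) := by
  have hsplit := fun s => sum_mul_sub_mul_sign_eq k c κ (ζ s) (ζ' s) (N₂ s) (N₁ s)
    (fun i => N₂' s i + N₁' s i)
  simp only [hsplit] at hL ⊢
  have hP := hL.sub hG
  simp only [add_sub_cancel_right] at hP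
  have hFTC := integral_sum_mul_sub_mul_sum_abs hζ (fun t => (hN₂ t).add (hN₁ t)) κ a b
  simp only [Pi.add_apply, PiLp.add_apply] at hFTC
  rw [integral_add hP hG, hFTC hP]

end

theorem stmt_10_general {n : ℕ} (k₂ c : ℝ) (hk₂ : 0 < k₂)
    (ζ ζd N2 N2d N1 N1d : ℝ → EuclideanSpace ℝ (Fin n))
    (hζ : ∀ t, HasDerivAt ζ (ζd t) t)
    (hN2 : ∀ t, HasDerivAt N2 (N2d t) t)
    (hN1 : ∀ t, HasDerivAt N1 (N1d t) t)
    (εM dM ddM εdM NM NdM : ℝ)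
    (hbN2 : ∀ t, ‖N2 t‖ ≤ εM + dM)
    (hbN2d : ∀ t, ‖N2d t‖ ≤ ddM + εdM)
    (hbN1 : ∀ t, ‖N1 t‖ ≤ NM)
    (hbN1d : ∀ t, ‖N1d t‖ ≤ NdM)
    (κd : ℝ)
    (hκd : κd = dM + εM + (1 / k₂) * max (ddM + εdM + NdM + c) (k₂ * NM))
    (L : ℝ → ℝ)
    (hL : ∀ t, L t =
      (∑ i, (ζd t i + k₂ * ζ t i) * (N2 t i - κd * Real.sign (ζ t i))) +
      (∑ i, ζd t i * N1 t i) +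
      c * ∑ i, ζ t i * Real.sign (ζ t i)) :
    ∀ t : ℝ, 0 ≤ t →
      0 ≤ κd * (∑ i, |ζ 0 i|) - (∑ i, ζ 0 i * (N2 0 i + N1 0 i))
          - ∫ s in (0:ℝ)..t, L s := by
  intro t ht
  have hκ : εM + dM + NM ≤ κd := add_le_of_eq_add_one_div_mul_max hk₂ (by rw [hκd]; ring)
  have hκ' : k₂ * (εM + dM) + (ddM + εdM + NdM + c) ≤ k₂ * κd :=
    mul_add_le_mul_of_eq_add_one_div_mul_max hk₂ (by rw [hκd]; ring)
  have hN : ∀ s, ‖N2 s + N1 s‖ ≤ εM + dM + NM := fun s =>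
    (norm_add_le _ _).trans (add_le_add (hbN2 s) (hbN1 s))
  have hNd : ∀ s, ‖N2d s + N1d s‖ ≤ ddM + εdM + NdM := fun s =>
    (norm_add_le _ _).trans (add_le_add (hbN2d s) (hbN1d s))
  have hH : ∀ s, ∑ i, ζ s i * (N2 s i + N1 s i) - κd * ∑ i, |ζ s i| ≤ 0 := fun s =>
    sum_mul_sub_mul_sum_abs_nonpos (ζ s) (hN s) hκ
  by_cases hInt : IntervalIntegrable L volume 0 t
  swap
  · rw [integral_undef hInt]
    linarith [hH 0]
  obtain rfl : L = _ := funext hL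
  have hG_int := intervalIntegrable_remainder hζ hN2 hN1 hNd k₂ c κd 0 t
  have hG := integral_mono_on ht hG_int intervalIntegrable_const fun s _ =>
    mul_sum_mul_add_mul_sum_abs_sub_sum_mul_nonpos (ζ s) hk₂.le (hbN2 s) (hNd s) (by linarith)
  rw [intervalIntegral.integral_zero] at hG
  rw [integral_eq_sub_add_integral_remainder hζ hN2 hN1 k₂ c κd 0 t hInt hG_int]
  linarith [hH t]

/-- Lemma 5 of the paper: with `L(t) = r(t)ᵀ(N̄₂(t) − κ_d sgn ζ(t)) + ζ̇(t)ᵀÑ₁(t)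
+ c ζ(t)ᵀ sgn ζ(t)`, `r = ζ̇ + k₂ ζ`, under the stated bounds on `N̄₂, Ñ₁` and
their derivatives, and with the gain
`κ_d = d_M + ε_M + (1/k₂) max{d_{dM}+ε_{dM}+N_{dM}+c, k₂ N_M}`, the quantity
`M(t) = κ_d‖ζ(0)‖₁ − ζ(0)ᵀ(N̄₂(0)+Ñ₁(0)) − ∫₀ᵗ L(s) ds` is nonnegative. -/
theorem stmt_10 {n : ℕ} (k₂ c : ℝ) (hk₂ : 0 < k₂) (hc : 0 ≤ c)
    (ζ ζd N2 N2d N1 N1d : ℝ → EuclideanSpace ℝ (Fin n))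
    (hζ : ∀ t, HasDerivAt ζ (ζd t) t)
    (hN2 : ∀ t, HasDerivAt N2 (N2d t) t)
    (hN1 : ∀ t, HasDerivAt N1 (N1d t) t)
    (εM dM ddM εdM NM NdM : ℝ)
    (hbN2 : ∀ t, ‖N2 t‖ ≤ εM + dM)
    (hbN2d : ∀ t, ‖N2d t‖ ≤ ddM + εdM)
    (hbN1 : ∀ t, ‖N1 t‖ ≤ NM)
    (hbN1d : ∀ t, ‖N1d t‖ ≤ NdM)
    (κd : ℝ)
    (hκd : κd = dM + εM + (1 / k₂) * max (ddM + εdM + NdM + c) (k₂ * NM))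
    (L : ℝ → ℝ)
    (hL : ∀ t, L t =
      (∑ i, (ζd t i + k₂ * ζ t i) * (N2 t i - κd * Real.sign (ζ t i))) +
      (∑ i, ζd t i * N1 t i) +
      c * ∑ i, ζ t i * Real.sign (ζ t i)) :
    ∀ t : ℝ, 0 ≤ t →
      0 ≤ κd * (∑ i, |ζ 0 i|) - (∑ i, ζ 0 i * (N2 0 i + N1 0 i))
          - ∫ s in (0:ℝ)..t, L s :=
  stmt_10_general k₂ c hk₂ ζ ζd N2 N2d N1 N1d hζ hN2 hN1 εM dM ddM εdM NM NdM hbN2 hbN2d hbN1 hbN1d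
    κd hκd L hL
end

section
/- Barbalat's lemma: if f : [0,∞) → ℝ is uniformly continuous and the limit of ∫₀ᵗ f(s) ds as t → ∞ exists and is finite, then f(t) → 0 as t → ∞. -/
/-!
Uniform continuity keeps `f` within `ε / 2` of `f t` on a window `[t, t + h]` of fixed length,
so `h |f t| ≤ |∫ₜ^{t+h} f| + ε h / 2`; and `∫ₜ^{t+h} f = ∫₀^{t+h} f - ∫₀ᵗ f → l - l = 0`.
-/

open MeasureTheory Filter Topology

variable {E : Type*} [NormedAddCommGroup E]

lemma tendsto_intervalIntegral_add_const_of_tendsto [NormedSpace ℝ E] {f : ℝ → E} {l : E}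
    (a h : ℝ) (hf : ∀ᶠ t in atTop, IntervalIntegrable f volume a t)
    (hconv : Tendsto (fun t => ∫ s in a..t, f s) atTop (𝓝 l)) :
    Tendsto (fun t => ∫ s in t..t + h, f s) atTop (𝓝 0) := by
  have hshift : Tendsto (fun t => ∫ s in a..t + h, f s) atTop (𝓝 l) :=
    hconv.comp (tendsto_atTop_add_const_right _ h tendsto_id)
  have hf' : ∀ᶠ t in atTop, IntervalIntegrable f volume a (t + h) :=
    (tendsto_atTop_add_const_right _ h tendsto_id).eventually hf
  rw [← sub_self l]
  refine (hshift.sub hconv).congr' ?_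
  filter_upwards [hf, hf'] with t ht ht'
  exact intervalIntegral.integral_interval_sub_left ht' ht

lemma norm_intervalIntegral_sub_smul_le [NormedSpace ℝ E] [CompleteSpace E] {f : ℝ → E}
    {t h C : ℝ} (hh : 0 ≤ h)
    (hf : IntervalIntegrable f volume t (t + h))
    (hC : ∀ s ∈ Set.Ioc t (t + h), ‖f s - f t‖ ≤ C) :
    ‖(∫ s in t..t + h, f s) - h • f t‖ ≤ C * h := by
  have hrewrite : (∫ s in t..t + h, f s) - h • f t = ∫ s in t..t + h, (f s - f t) := by
    rw [intervalIntegral.integral_sub hf intervalIntegrable_const,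
      intervalIntegral.integral_const, add_sub_cancel_left]
  rw [hrewrite]
  have := intervalIntegral.norm_integral_le_of_norm_le_const (a := t) (b := t + h)
    (f := fun s => f s - f t) (C := C) (by rwa [Set.uIoc_of_le (by linarith)])
  rwa [add_sub_cancel_left, abs_of_nonneg hh] at this

lemma ContinuousOn.intervalIntegrable_of_Ici {f : ℝ → E} {a₀ a b : ℝ}
    (hf : ContinuousOn f (Set.Ici a₀)) (ha : a₀ ≤ a) (hab : a ≤ b) :
    IntervalIntegrable f volume a b :=
  ContinuousOn.intervalIntegrable_of_Icc hab (hf.mono ((Set.Icc_subset_Ici_iff hab).2 ha))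

/-- Barbalat's lemma: if `f : [0,∞) → ℝ` is uniformly continuous and
`∫₀ᵗ f(s) ds` converges to a finite limit as `t → ∞`, then `f(t) → 0`. -/
theorem stmt_13 (f : ℝ → ℝ)
    (huc : UniformContinuousOn f (Set.Ici 0))
    (l : ℝ)
    (hconv : Tendsto (fun t => ∫ s in (0:ℝ)..t, f s) atTop (nhds l)) :
    Tendsto f atTop (nhds 0) := by
  have hint : ∀ a b : ℝ, 0 ≤ a → a ≤ b → IntervalIntegrable f volume a b :=
    fun _ _ => huc.continuousOn.intervalIntegrable_of_Ici
  rw [Metric.tendsto_atTop]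
  intro ε hε
  obtain ⟨δ, hδ, hclose⟩ := Metric.uniformContinuousOn_iff.1 huc (ε / 2) (by positivity)
  set h := δ / 2 with h_def
  have hh : 0 < h := by positivity
  have hwindow := tendsto_intervalIntegral_add_const_of_tendsto 0 h
    ((eventually_ge_atTop 0).mono fun t ht => hint 0 t le_rfl ht) hconv
  obtain ⟨T, hT⟩ := Metric.tendsto_atTop.1 hwindow (ε * h / 2) (by positivity)
  refine ⟨max T 0, fun t ht => ?_⟩
  have ht0 : 0 ≤ t := le_of_max_le_right ht
  have hsmall : ‖∫ s in t..t + h, f s‖ < ε * h / 2 := by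
    simpa using hT t (le_of_max_le_left ht)
  have hmean : ‖(∫ s in t..t + h, f s) - h • f t‖ ≤ ε / 2 * h := by
    refine norm_intervalIntegral_sub_smul_le hh.le (hint t _ ht0 (by linarith)) fun s hs => ?_
    refine (hclose s (ht0.trans hs.1.le) t ht0 ?_).le
    rw [Real.dist_eq, abs_of_pos (by linarith [hs.1])]
    linarith [hs.2, h_def]
  have hscaled : h * |f t| < h * ε := calc
    h * |f t| = ‖h • f t‖ := by rw [norm_smul, Real.norm_of_nonneg hh.le, Real.norm_eq_abs]
    _ ≤ ‖∫ s in t..t + h, f s‖ + ‖(∫ s in t..t + h, f s) - h • f t‖ :=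
      norm_le_norm_add_norm_sub _ _
    _ < h * ε := by linarith
  simpa [Real.dist_eq] using lt_of_mul_lt_mul_left hscaled hh.le
end
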